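/- arXiv:2304.10956 — 2 statements merged into one kernel-verified Lean document; each statement's English description precedes it below -/
import Mathlib

section
/- Let P be a complete lattice and φ : P → Prop a monotone map (p ≤ q implies φ p → φ q). Then φ is a left ultrafunctor to the two-element ultraposet, i.e. for every type S, every f : S → P, and every μ : Ultrafilter S, φ (⨆ A ∈ μ, ⨅ s ∈ A, f s) implies {s | φ (f s)} ∈ μ, if and only if the set {p | ¬ φ p} is canonically closed. -/
universe u

/-- A subset of a complete lattice is canonically closed if it is closed under
canonical ultraproducts of families valued in it. -/
def CanonicallyClosed {P : Type u} [CompleteLattice P] (K : Set P) : Prop :=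
  ∀ (S : Type u) (f : S → P), (∀ s, f s ∈ K) →
    ∀ μ : Ultrafilter S, (⨆ A ∈ μ, ⨅ s ∈ A, f s) ∈ K

open Filter

/-- The canonical ultraproduct `⟨f, μ⟩`. -/
def canonicalUltraproduct {S P : Type*} [CompleteLattice P] (f : S → P) (μ : Ultrafilter S) : P :=
  ⨆ A ∈ μ, ⨅ s ∈ A, f s

theorem canonicalUltraproduct_le_comp {S T P : Type*} [CompleteLattice P] (f : S → P)
    {μ : Ultrafilter S} {ν : Ultrafilter T} {m : T → S} (hm : Tendsto m ν μ) :
    canonicalUltraproduct f μ ≤ canonicalUltraproduct (f ∘ m) ν :=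
  iSup₂_le fun A hA =>
    le_iSup₂_of_le (m ⁻¹' A) (hm hA) (le_iInf₂ fun t ht => iInf₂_le (m t) ht)

/-- The witness is the ultraproduct of `f` restricted to the `μ`-large set where it lands
in `K`. -/
theorem CanonicallyClosed.exists_ge_mem {P : Type u} [CompleteLattice P] {K : Set P}
    (hK : CanonicallyClosed K) {S : Type u} (f : S → P) {μ : Ultrafilter S}
    (hf : {s | f s ∈ K} ∈ μ) : ∃ k ∈ K, canonicalUltraproduct f μ ≤ k := by
  let ν : Ultrafilter {s // f s ∈ K} :=
    μ.comap Subtype.val_injective (by rwa [Subtype.range_coe_subtype])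
  exact ⟨_, hK _ (f ∘ Subtype.val) (fun t => t.prop) ν,
    canonicalUltraproduct_le_comp f (μ.coe_comap _ _ ▸ tendsto_comap)⟩

/-- A monotone map from a complete lattice to `Prop` is a left ultrafunctor to
the two-element ultraposet iff the preimage of `False` is canonically closed. -/
theorem leftUltrafunctor_to_two_iff {P : Type u} [CompleteLattice P]
    (φ : P → Prop) (hφ : ∀ p q : P, p ≤ q → φ p → φ q) :
    (∀ (S : Type u) (f : S → P) (μ : Ultrafilter S),
        φ (⨆ A ∈ μ, ⨅ s ∈ A, f s) → {s | φ (f s)} ∈ μ) ↔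
      CanonicallyClosed {p : P | ¬ φ p} := by
  constructor
  · intro hleft S f hf μ hφμ
    have hempty : {s | φ (f s)} = ∅ := Set.eq_empty_of_forall_notMem hf
    exact μ.empty_notMem (hempty ▸ hleft S f μ hφμ)
  · intro hK S f μ hφμ
    by_contra hnot
    obtain ⟨k, hk, hle⟩ := hK.exists_ge_mem f (Ultrafilter.compl_mem_iff_notMem.2 hnot)
    exact hk (hφ _ k hle hφμ)
end

section
/- Let D be a distributive lattice with ⊤ and ⊥, and let K ⊆ Spec D be ultraproduct-closed and up-closed. Then K is the intersection of the primitive sets containing it: K = {x ∈ Spec D | ∀ p : D, (∀ y ∈ K, p ∈ y) → p ∈ x}; equivalently, K = ⋂ over all p with K ⊆ B_p of B_p. -/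
/-!
Let `x` be a prime ideal lying in every `B_p` that contains `K`. Each `q ∉ x` is then avoided by
some `f q ∈ K`. Because `x` is prime, its complement is closed under `⊓`, so the sets
`{q' | q ∉ f q'}` form a filter base on the complement of `x`; an ultrafilter `μ` refining it
gives an ultraproduct `⟨f, μ⟩ ∈ K` that avoids every `q ∉ x`, i.e. `⟨f, μ⟩ ≤ x`. Up-closure
puts `x` in `K`.
-/

universe u v

/-- The set of prime ideals of a bounded distributive lattice `D`. -/
def Spec (D : Type u) [DistribLattice D] [BoundedOrder D] : Set (Order.Ideal D) :=
  {x | x.IsPrime}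

/-- `K` is ultraproduct-closed: whenever `f` is a family of ideals valued in
`K` and `J` is the ultraproduct of `f` along the ultrafilter `μ`
(characterised by `p ∈ J ↔ {s | p ∈ f s} ∈ μ`), then `J` belongs to `K`. -/
def UltraClosed (D : Type u) [DistribLattice D] [BoundedOrder D]
    (K : Set (Order.Ideal D)) : Prop :=
  ∀ (S : Type u) (f : S → Order.Ideal D) (μ : Ultrafilter S) (J : Order.Ideal D),
    (∀ s, f s ∈ K) → (∀ p : D, p ∈ J ↔ {s | p ∈ f s} ∈ μ) → J ∈ K

/-- `K` is up-closed in `Spec D`. -/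
def UpClosed (D : Type u) [DistribLattice D] [BoundedOrder D]
    (K : Set (Order.Ideal D)) : Prop :=
  ∀ x ∈ K, ∀ y ∈ Spec D, x ≤ y → y ∈ K

/-- `K` is down-closed in `Spec D`. -/
def DownClosed (D : Type u) [DistribLattice D] [BoundedOrder D]
    (K : Set (Order.Ideal D)) : Prop :=
  ∀ x ∈ K, ∀ y ∈ Spec D, y ≤ x → y ∈ K

theorem Ultrafilter.exists_forall_mem_of_directed {ι α : Type*} [Nonempty α] {A : ι → Set α}
    (hd : Directed (· ⊇ ·) A) (hne : ∀ i, (A i).Nonempty) : ∃ μ : Ultrafilter α, ∀ i, A i ∈ μ := by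
  have : (⨅ i, Filter.principal (A i)).NeBot :=
    Filter.iInf_neBot_of_directed
      (hd.mono_comp (· ⊇ ·) (g := Filter.principal) fun _ _ => Filter.principal_mono.2)
      fun i => Filter.principal_neBot_iff.2 (hne i)
  exact ⟨Ultrafilter.of _, fun i => Ultrafilter.of_le _ (Filter.mem_iInf_of_mem i
    (Filter.mem_principal_self _))⟩

namespace Order.Ideal

section Ultraproduct

variable {D S : Type*} [SemilatticeSup D] [OrderBot D]

def ultraproduct (f : S → Ideal D) (μ : Ultrafilter S) : Ideal D where
  carrier := {p | {s | p ∈ f s} ∈ μ}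
  lower' _ _ hba ha := Filter.mem_of_superset ha fun s hs => (f s).lower hba hs
  nonempty' := ⟨⊥, Filter.mem_of_superset Filter.univ_mem fun s _ => bot_mem (f s)⟩
  directed' a ha b hb := ⟨a ⊔ b, Filter.mem_of_superset (Filter.inter_mem ha hb)
    fun _ hs => sup_mem hs.1 hs.2, le_sup_left, le_sup_right⟩

theorem mem_ultraproduct {f : S → Ideal D} {μ : Ultrafilter S} {p : D} :
    p ∈ ultraproduct f μ ↔ {s | p ∈ f s} ∈ μ :=
  Iff.rfl

end Ultraproduct

theorem IsPrime.exists_ultraproduct_le {D : Type*} [Lattice D] [OrderBot D] {x : Ideal D}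
    (hx : x.IsPrime) (f : {q // q ∉ x} → Ideal D) (hf : ∀ q, q.1 ∉ f q) :
    ∃ μ : Ultrafilter {q // q ∉ x}, ultraproduct f μ ≤ x := by
  have : Nonempty {q // q ∉ x} := by
    obtain ⟨q, hq⟩ := Set.nonempty_compl.2 hx.ne_univ
    exact ⟨⟨q, hq⟩⟩
  have hd : Directed (· ⊇ ·) fun q : {q // q ∉ x} => {s | q.1 ∈ f s}ᶜ := by
    rintro ⟨q₁, h₁⟩ ⟨q₂, h₂⟩
    refine ⟨⟨q₁ ⊓ q₂, fun h => (hx.mem_or_mem h).elim h₁ h₂⟩, ?_, ?_⟩ <;>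
      exact Set.compl_subset_compl.2 fun s hs => (f s).lower (by simp) hs
  obtain ⟨μ, hμ⟩ := Ultrafilter.exists_forall_mem_of_directed hd fun q => ⟨q, hf q⟩
  refine ⟨μ, fun q hq => by_contra fun hqx => ?_⟩
  exact Ultrafilter.compl_mem_iff_notMem.1 (hμ ⟨q, hqx⟩) (mem_ultraproduct.1 hq)

end Order.Ideal

/-- Every ultraproduct-closed up-closed subset of `Spec D` is the intersection
of the primitive sets `B_p` containing it. -/
theorem closed_upset_eq_iInter_primitive {D : Type u} [DistribLattice D] [BoundedOrder D]
    (K : Set (Order.Ideal D)) (hKsub : K ⊆ Spec D)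
    (hcl : UltraClosed D K) (hup : UpClosed D K) :
    K = {x | x ∈ Spec D ∧ ∀ p : D, (∀ y ∈ K, p ∈ y) → p ∈ x} := by
  ext x
  refine ⟨fun hx => ⟨hKsub hx, fun p hp => hp x hx⟩, ?_⟩
  rintro ⟨hxS, hx⟩
  have hsep : ∀ q : {q // q ∉ x}, ∃ y ∈ K, q.1 ∉ y := fun q => by
    by_contra! h
    exact q.2 (hx q h)
  choose f hfK hf using hsep
  obtain ⟨μ, hle⟩ := Order.Ideal.IsPrime.exists_ultraproduct_le hxS f hf
  exact hup _ (hcl _ f μ _ hfK fun _ => Order.Ideal.mem_ultraproduct) x hxS hle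
end
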